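/- arXiv:2008.01542 — 4 statements merged into one kernel-verified Lean document; each statement's English description precedes it below -/
import Mathlib

section
/- If n and m are natural numbers with n ≥ 2, m ≥ 2, and m_{n+m−1} ≤ M_n, then m ≤ D + N + 2·β − 1. -/
open Real

/-- Lower eigenvalue estimate of Berkolaiko–Kennedy–Kurasov–Mugnolo. -/
noncomputable def mLow (L : ℝ) (N β : ℕ) (n : ℕ) : ℝ :=
  if n < N + β then (π ^ 2 / L ^ 2) * ((n : ℝ) ^ 2 / 4)
  else (π ^ 2 / L ^ 2) * ((n : ℝ) - ((N : ℝ) + (β : ℝ)) / 2) ^ 2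

/-- Upper eigenvalue estimate of Berkolaiko–Kennedy–Kurasov–Mugnolo. -/
noncomputable def MUp (L : ℝ) (D N β : ℕ) (n : ℕ) : ℝ :=
  (π ^ 2 / L ^ 2) * ((n : ℝ) - 2 + (D : ℝ) + ((N : ℝ) + (β : ℝ)) / 2 + (β : ℝ)) ^ 2

lemma mLow_of_le {L : ℝ} {N β k : ℕ} (hk : N + β ≤ k) :
    mLow L N β k = π ^ 2 / L ^ 2 * ((k : ℝ) - ((N : ℝ) + β) / 2) ^ 2 := by
  rw [mLow, if_neg (not_lt.2 hk)]

/-- Beyond the threshold `N + β` both estimates are `π² / L²` times the square of a nonnegative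
number, so comparing them compares those numbers. -/
lemma le_of_mLow_le_MUp {L : ℝ} (hL : L ≠ 0) {D N β n k : ℕ} (hn : 2 ≤ n) (hk : N + β ≤ k)
    (h : mLow L N β k ≤ MUp L D N β n) :
    (k : ℝ) - ((N : ℝ) + β) / 2 ≤ (n : ℝ) - 2 + D + ((N : ℝ) + β) / 2 + β := by
  rw [mLow_of_le hk, MUp] at h
  have hk' : ((N + β : ℕ) : ℝ) ≤ k := by exact_mod_cast hk
  have hn' : (2 : ℝ) ≤ n := by exact_mod_cast hn
  push_cast at hk'
  refine (pow_le_pow_iff_left₀ ?_ ?_ two_ne_zero).1 (le_of_mul_le_mul_left h (by positivity))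
  · linarith
  · positivity

theorem mult_le_of_bounds_general (L : ℝ) (hL : 0 < L) (D N β : ℕ)
    (n m : ℕ) (hn : 2 ≤ n)
    (h : mLow L N β (n + m - 1) ≤ MUp L D N β n) :
    (m : ℤ) ≤ (D : ℤ) + (N : ℤ) + 2 * (β : ℤ) - 1 := by
  rcases lt_or_ge (n + m - 1) (N + β) with hlow | hhigh
  · -- `n + m - 1 < N + β` with `n ≥ 2` already gives `m ≤ N + β - 2`
    omega
  · have hreal := le_of_mLow_le_MUp hL.ne' hn hhigh h
    have hint : ((n + m - 1 : ℕ) : ℤ) ≤ n - 2 + D + N + 2 * β := by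
      exact_mod_cast (by linarith : ((n + m - 1 : ℕ) : ℝ) ≤ n - 2 + D + N + 2 * β)
    omega

/-- If m_{n+m-1} ≤ M_n with n, m ≥ 2, then m ≤ D + N + 2β - 1. -/
theorem mult_le_of_bounds (L : ℝ) (hL : 0 < L) (D N β : ℕ)
    (n m : ℕ) (hn : 2 ≤ n) (hm : 2 ≤ m)
    (h : mLow L N β (n + m - 1) ≤ MUp L D N β n) :
    (m : ℤ) ≤ (D : ℤ) + (N : ℤ) + 2 * (β : ℤ) - 1 :=
  mult_le_of_bounds_general L hL D N β n m hn h
end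

section
/- Let λ : ℕ → ℝ be a sequence such that m_k ≤ λ_k ≤ M_k for every k ≥ 2. If for some natural numbers n ≥ 2 and m ≥ 2 one has λ_n = λ_{n+m−1} (an eigenvalue of multiplicity at least m), then m ≤ D + N + 2·β − 1. In other words, the multiplicity of any eigenvalue of the graph Laplacian (other than the simple ground state) is at most D + N + 2β − 1. -/
open Real

/-- The multiplicity of any eigenvalue (other than the ground state) is at most
D + N + 2β - 1. -/
theorem mult_le_max (L : ℝ) (hL : 0 < L) (D N β : ℕ) (lam : ℕ → ℝ)
    (hbounds : ∀ k : ℕ, 2 ≤ k → mLow L N β k ≤ lam k ∧ lam k ≤ MUp L D N β k)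
    (n m : ℕ) (hn : 2 ≤ n) (hm : 2 ≤ m)
    (hdeg : lam n = lam (n + m - 1)) :
    (m : ℤ) ≤ (D : ℤ) + (N : ℤ) + 2 * (β : ℤ) - 1 := by
  have hk2 : 2 ≤ n + m - 1 := by omega
  obtain ⟨_, hu1⟩ := hbounds n hn
  obtain ⟨hl2, _⟩ := hbounds _ hk2
  rw [← hdeg] at hl2
  have hchain : mLow L N β (n + m - 1) ≤ MUp L D N β n := le_trans hl2 hu1
  have hc : 0 < π ^ 2 / L ^ 2 := by positivity
  by_cases hcase : n + m - 1 < N + β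
  · omega
  · rw [mLow, if_neg hcase, MUp] at hchain
    have hk : ((n + m - 1 : ℕ) : ℝ) = (n : ℝ) + (m : ℝ) - 1 := by
      rw [Nat.cast_sub (by omega), Nat.cast_add, Nat.cast_one]
    rw [hk] at hchain
    have hNβ : (N : ℝ) + (β : ℝ) ≤ (n : ℝ) + (m : ℝ) - 1 := by
      have h := not_lt.mp hcase
      have : ((N + β : ℕ) : ℝ) ≤ ((n + m - 1 : ℕ) : ℝ) := Nat.cast_le.mpr h
      rw [hk] at this; push_cast at this ⊢; linarith
    set a : ℝ := (n : ℝ) + (m : ℝ) - 1 - ((N : ℝ) + (β : ℝ)) / 2 with ha_def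
    set b : ℝ := (n : ℝ) - 2 + (D : ℝ) + ((N : ℝ) + (β : ℝ)) / 2 + (β : ℝ) with hb_def
    have ha : 0 ≤ a := by
      have h0 : (0 : ℝ) ≤ (N : ℝ) + (β : ℝ) := by positivity
      simp only [ha_def]; linarith
    have hb : 0 ≤ b := by
      have h1 : (2 : ℝ) ≤ (n : ℝ) := by exact_mod_cast hn
      have h0 : (0 : ℝ) ≤ (N : ℝ) + (β : ℝ) := by positivity
      have hD : (0 : ℝ) ≤ (D : ℝ) := Nat.cast_nonneg _
      have hβ : (0 : ℝ) ≤ (β : ℝ) := Nat.cast_nonneg _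
      simp only [hb_def]; linarith
    have h2 : a ^ 2 ≤ b ^ 2 := le_of_mul_le_mul_left hchain hc
    have hab : a ≤ b := by nlinarith
    have hfin : (m : ℝ) ≤ (D : ℝ) + (N : ℝ) + 2 * (β : ℝ) - 1 := by
      simp only [ha_def, hb_def] at hab; linarith
    exact_mod_cast hfin
end

section
/- For all natural numbers n ≥ 2 and m ≥ 2, one has M_n = m_{n+m−1} if and only if m = D + N + 2·β − 1. (Thus a degenerate eigenvalue can be simultaneously upper sharp at its smallest index and lower sharp at its largest index if and only if it is maximally degenerate.) -/
open Real

/-- For n ≥ 2, m ≥ 2, one has M_n = m_{n+m-1} iff m = D + N + 2β - 1. -/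
theorem MUp_eq_mLow_iff (L : ℝ) (hL : 0 < L) (D N β : ℕ)
    (n m : ℕ) (hn : 2 ≤ n) (hm : 2 ≤ m) :
    MUp L D N β n = mLow L N β (n + m - 1) ↔
      (m : ℤ) = (D : ℤ) + (N : ℤ) + 2 * (β : ℤ) - 1 := by
  have hC : (0:ℝ) < π ^ 2 / L ^ 2 := by
    have := Real.pi_pos
    positivity
  have hcast : ((n + m - 1 : ℕ) : ℝ) = (n : ℝ) + (m : ℝ) - 1 := by
    have h1 : 1 ≤ n + m := by omega
    push_cast [h1]
    ring
  have hn' : (2 : ℝ) ≤ (n : ℝ) := by exact_mod_cast hn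
  have hm' : (2 : ℝ) ≤ (m : ℝ) := by exact_mod_cast hm
  unfold MUp mLow
  rw [hcast]
  split_ifs with h
  · -- n + m - 1 < N + β : both sides are false
    have h' : (n : ℝ) + (m : ℝ) - 1 ≤ (N : ℝ) + (β : ℝ) - 1 := by
      have : n + m ≤ N + β := by omega
      have : (n : ℝ) + (m : ℝ) ≤ (N : ℝ) + (β : ℝ) := by exact_mod_cast this
      linarith
    constructor
    · intro heq
      exfalso
      have heq2 : ((n : ℝ) - 2 + (D : ℝ) + ((N : ℝ) + (β : ℝ)) / 2 + (β : ℝ)) ^ 2 =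
          ((n : ℝ) + (m : ℝ) - 1) ^ 2 / 4 :=
        mul_left_cancel₀ hC.ne' heq
      have hD : (0:ℝ) ≤ (D:ℝ) := Nat.cast_nonneg D
      have hβ : (0:ℝ) ≤ (β:ℝ) := Nat.cast_nonneg β
      have hN : (0:ℝ) ≤ (N:ℝ) := Nat.cast_nonneg N
      nlinarith [sq_nonneg ((n : ℝ) + (m : ℝ) - 1)]
    · intro hmeq
      exfalso
      omega
  · -- n + m - 1 ≥ N + β
    have hge : (N : ℝ) + (β : ℝ) ≤ (n : ℝ) + (m : ℝ) - 1 := by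
      have : N + β ≤ n + m - 1 := by omega
      have : (N : ℝ) + (β : ℝ) ≤ ((n + m - 1 : ℕ) : ℝ) := by exact_mod_cast this
      linarith [hcast ▸ this]
    have hD : (0:ℝ) ≤ (D:ℝ) := Nat.cast_nonneg D
    have hβ : (0:ℝ) ≤ (β:ℝ) := Nat.cast_nonneg β
    have hN : (0:ℝ) ≤ (N:ℝ) := Nat.cast_nonneg N
    have hA : (0:ℝ) ≤ (n : ℝ) - 2 + (D : ℝ) + ((N : ℝ) + (β : ℝ)) / 2 + (β : ℝ) := by linarith
    have hB : (0:ℝ) ≤ (n : ℝ) + (m : ℝ) - 1 - ((N : ℝ) + (β : ℝ)) / 2 := by linarith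
    rw [mul_right_inj' hC.ne']
    rw [sq_eq_sq₀ hA hB]
    constructor
    · intro heq
      have : (m : ℝ) = (D : ℝ) + (N : ℝ) + 2 * (β : ℝ) - 1 := by linarith
      exact_mod_cast this
    · intro hz
      have : (m : ℝ) = (D : ℝ) + (N : ℝ) + 2 * (β : ℝ) - 1 := by exact_mod_cast hz
      linarith
end

section
/- Let λ : ℕ → ℝ be a sequence such that m_k ≤ λ_k ≤ M_k for every k ≥ 2, and let n ≥ 2, m ≥ 2 be natural numbers with λ_n = λ_{n+m−1} (a degenerate eigenvalue of multiplicity m). Then the two conditions λ_n = M_n and λ_{n+m−1} = m_{n+m−1} hold simultaneously if and only if m = D + N + 2·β − 1. (A degenerate eigenvalue is sharp if and only if it is maximally degenerate.) -/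
open Real

/-- A degenerate eigenvalue is sharp if and only if it is maximally degenerate. -/
theorem sharp_iff_maximallyDegenerate (L : ℝ) (hL : 0 < L) (D N β : ℕ)
    (lam : ℕ → ℝ)
    (hbounds : ∀ k : ℕ, 2 ≤ k → mLow L N β k ≤ lam k ∧ lam k ≤ MUp L D N β k)
    (n m : ℕ) (hn : 2 ≤ n) (hm : 2 ≤ m)
    (hdeg : lam n = lam (n + m - 1)) :
    (lam n = MUp L D N β n ∧ lam (n + m - 1) = mLow L N β (n + m - 1)) ↔
      (m : ℤ) = (D : ℤ) + (N : ℤ) + 2 * (β : ℤ) - 1 := by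
  have hc : 0 < π ^ 2 / L ^ 2 := div_pos (pow_pos pi_pos 2) (pow_pos hL 2)
  set c := π ^ 2 / L ^ 2 with hcdef
  set k := n + m - 1 with hkdef
  have hK : (k : ℝ) = (n : ℝ) + (m : ℝ) - 1 := by
    have : k + 1 = n + m := by omega
    have := congrArg (Nat.cast (R := ℝ)) this
    push_cast at this
    linarith
  have hn' : (2 : ℝ) ≤ (n : ℝ) := by exact_mod_cast hn
  have hm' : (2 : ℝ) ≤ (m : ℝ) := by exact_mod_cast hm
  have hD0 : (0 : ℝ) ≤ (D : ℝ) := Nat.cast_nonneg D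
  have hN0 : (0 : ℝ) ≤ (N : ℝ) := Nat.cast_nonneg N
  have hB0 : (0 : ℝ) ≤ (β : ℝ) := Nat.cast_nonneg β
  constructor
  · rintro ⟨h1, h2⟩
    have heq : MUp L D N β n = mLow L N β k := by rw [← h1, hdeg, h2]
    unfold MUp mLow at heq
    rw [← hcdef] at heq
    by_cases hcase : k < N + β
    · exfalso
      rw [if_pos hcase] at heq
      -- k ≤ N + β - 1
      have hKle : (k : ℝ) ≤ (N : ℝ) + (β : ℝ) - 1 := by
        have h' : ((k : ℕ) : ℝ) + 1 ≤ (N : ℝ) + (β : ℝ) := by exact_mod_cast hcase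
        linarith
      have hK0 : (0 : ℝ) ≤ (k : ℝ) := Nat.cast_nonneg k
      set A : ℝ := (n : ℝ) - 2 + (D : ℝ) + ((N : ℝ) + (β : ℝ)) / 2 + (β : ℝ) with hA
      have hApos : (k : ℝ) / 2 + 1 / 2 ≤ A := by
        rw [hA]; linarith
      have hsq : (k : ℝ) ^ 2 / 4 < A ^ 2 := by nlinarith
      nlinarith
    · rw [if_neg hcase] at heq
      have hKge : (N : ℝ) + (β : ℝ) ≤ (k : ℝ) := by
        exact_mod_cast Nat.le_of_not_lt hcase
      set A : ℝ := (n : ℝ) - 2 + (D : ℝ) + ((N : ℝ) + (β : ℝ)) / 2 + (β : ℝ) with hA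
      set B : ℝ := (k : ℝ) - ((N : ℝ) + (β : ℝ)) / 2 with hB
      have hA0 : 0 ≤ A := by rw [hA]; linarith
      have hB0' : 0 ≤ B := by rw [hB]; linarith
      have hsq : A ^ 2 = B ^ 2 := mul_left_cancel₀ (ne_of_gt hc) heq
      have hAB : A = B := by
        have h1 : |A| = |B| := by
          rw [← Real.sqrt_sq_eq_abs, ← Real.sqrt_sq_eq_abs, hsq]
        rwa [abs_of_nonneg hA0, abs_of_nonneg hB0'] at h1
      have hmr : (m : ℝ) = (D : ℝ) + (N : ℝ) + 2 * (β : ℝ) - 1 := by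
        rw [hA, hB, hK] at hAB; linarith
      have hz : (m : ℝ) = (((D : ℤ) + (N : ℤ) + 2 * (β : ℤ) - 1 : ℤ) : ℝ) := by
        push_cast; linarith
      exact_mod_cast hz
  · intro hmd
    have hkge : ¬ k < N + β := by omega
    have hmr : (m : ℝ) = (D : ℝ) + (N : ℝ) + 2 * (β : ℝ) - 1 := by
      exact_mod_cast hmd
    have hAB : ((n : ℝ) - 2 + (D : ℝ) + ((N : ℝ) + (β : ℝ)) / 2 + (β : ℝ))
        = ((k : ℝ) - ((N : ℝ) + (β : ℝ)) / 2) := by rw [hK]; linarith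
    have heq : MUp L D N β n = mLow L N β k := by
      unfold MUp mLow
      rw [if_neg hkge, ← hcdef, hAB]
    have hb1 := hbounds n hn
    have hb2 := hbounds k (by omega)
    have key : MUp L D N β n ≤ lam n := by rw [heq, hdeg]; exact hb2.1
    refine ⟨le_antisymm hb1.2 key, le_antisymm ?_ hb2.1⟩
    rw [← heq, ← hdeg]
    exact hb1.2
end
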